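/- Let f : (0,1) → ℝ be increasing with ∫₀¹ f(t)/t dt < ∞, let μ be a Borel measure on ℝⁿ finite on bounded sets, and let 0 < α ≤ 1. Then for μ-almost every x ∈ ℝⁿ, liminf_{r↓0} inf_{θ ∈ S^{n-1}} μ(B(x,r) \ H(x,θ,α)) / (f(r)·μ(B(x,r))) ≥ 1. -/

import Mathlib

open Set MeasureTheory Metric Filter
open scoped ENNReal RealInnerProductSpace Topology

/-!
Fix a direction `θ` and call `x` bad at scale `ρ` if
`μ(B(x,ρ) \ H(x,θ,a)) ≤ c · μ(B(x,2ρ))`. Order the bad points of a ball `B(z,ρ/2)` by the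
height `⟪·,θ⟫`: the points of `H(x,θ,a)` lie strictly above `x`, so every bad point `x` sees all
lower bad points of the ball inside `B(x,ρ) \ H(x,θ,a)`, and hence the bad points of `B(z,ρ/2)`
have measure at most `c · μ(B(z,3ρ))`. Summing over a lattice of such balls with bounded overlap,
the bad points in `B(0,N)` have measure `O_N(c)`.

At scale `ρ = 2⁻ᵏ⁻²` take `c = f(2⁻ᵏ⁻¹)`; the condition `∫₀¹ f(t)/t dt < ∞` makes these
bounds summable in `k`, so by Borel–Cantelli almost every `x` is bad at only finitely many dyadic
scales, for every direction `j` of a finite `α/2`-net of the sphere. Since `H(x,θ,α) ⊆ H(x,j,α/2)`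
when `|θ - j| < α/2`, a point that is not bad at scale `ρ < r ≤ 2ρ` satisfies
`f(r) μ(B(x,r)) < μ(B(x,r) \ H(x,θ,α))` for all `θ` at once.
-/

theorem measure_le_of_forall_measure_sublevel_le {α : Type*} [MeasurableSpace α]
    (μ : Measure α) {S : Set α} (h : α → ℝ) {ε : ℝ≥0∞}
    (hε : ∀ x ∈ S, μ {y ∈ S | h y ≤ h x} ≤ ε) : μ S ≤ ε := by
  by_cases hmax : ∃ x ∈ S, ∀ y ∈ S, h y ≤ h x
  · obtain ⟨x, hx, hmax⟩ := hmax
    rw [← sep_eq_self_iff_mem_true.2 hmax]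
    exact hε x hx
  push Not at hmax
  let F : {q : ℚ // ∃ x ∈ S, (q : ℝ) ≤ h x} → Set α := fun q => {y ∈ S | h y ≤ q}
  have hS : S = ⋃ q, F q := by
    refine Subset.antisymm (fun y hy => ?_) (iUnion_subset fun q => sep_subset _ _)
    obtain ⟨x, hx, hyx⟩ := hmax y hy
    obtain ⟨q, hyq, hqx⟩ := exists_rat_btwn hyx
    exact mem_iUnion.2 ⟨⟨q, x, hx, hqx.le⟩, hy, hyq.le⟩
  have hF : Monotone F := fun q q' hqq' y hy =>
    ⟨hy.1, hy.2.trans (by exact_mod_cast hqq')⟩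
  rw [hS, hF.measure_iUnion]
  refine iSup_le fun ⟨q, x, hx, hqx⟩ => (measure_mono fun y hy => ?_).trans (hε x hx)
  exact ⟨hy.1, hy.2.trans hqx⟩

theorem tsum_measure_le_of_encard_le {α ι : Type*} [MeasurableSpace α] (μ : Measure α)
    {s : ι → Set α} {M : ℕ} (hs_meas : ∀ i, MeasurableSet (s i))
    (hs : ∀ y, {i | y ∈ s i}.encard ≤ M) : ∑' i, μ (s i) ≤ M * μ (⋃ i, s i) := by
  simpa [Measure.sum_apply _ MeasurableSet.univ] using
    Measure.le_iff'.1 (Measure.sum_restrict_le hs_meas hs) univ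

theorem ae_eventually_notMem_of_tsum_measure_inter_closedBall_ne_top {α : Type*}
    [PseudoMetricSpace α] [MeasurableSpace α] (μ : Measure α) {s : ℕ → Set α} (x₀ : α)
    (h : ∀ N : ℕ, ∑' k, μ (s k ∩ closedBall x₀ N) ≠ ⊤) :
    ∀ᵐ x ∂μ, ∀ᶠ k in atTop, x ∉ s k := by
  filter_upwards [ae_all_iff.2 fun N => ae_eventually_notMem (h N)] with x hx
  obtain ⟨N, hN⟩ := exists_nat_ge (dist x x₀)
  exact (hx N).mono fun k hk hxk => hk ⟨hxk, hN⟩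

theorem ofReal_le_two_mul_setLIntegral_Ico {f : ℝ → ℝ} {r : ℝ} (hr : 0 < r)
    (hf : MonotoneOn f (Ico r (2 * r))) :
    ENNReal.ofReal (f r) ≤ 2 * ∫⁻ t in Ico r (2 * r), ENNReal.ofReal (f t / t) := by
  rcases le_or_gt (f r) 0 with hneg | hpos
  · rw [ENNReal.ofReal_of_nonpos hneg]
    exact zero_le
  have hr_mem : r ∈ Ico r (2 * r) := ⟨le_rfl, by linarith⟩
  calc ENNReal.ofReal (f r)
      = 2 * (ENNReal.ofReal (f r / (2 * r)) * volume (Ico r (2 * r))) := by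
        rw [Real.volume_Ico, ← ENNReal.ofReal_mul (by positivity), ← ENNReal.ofReal_ofNat 2,
          ← ENNReal.ofReal_mul zero_le_two]
        congr 1
        field_simp
        ring
    _ = 2 * ∫⁻ _ in Ico r (2 * r), ENNReal.ofReal (f r / (2 * r)) := by
        rw [setLIntegral_const]
    _ ≤ 2 * ∫⁻ t in Ico r (2 * r), ENNReal.ofReal (f t / t) := by
        gcongr 2 * ?_
        refine setLIntegral_mono' measurableSet_Ico fun t ht => ENNReal.ofReal_le_ofReal ?_
        have hft : f r ≤ f t := hf hr_mem ht ht.1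
        exact div_le_div₀ (hpos.le.trans hft) hft (hr.trans_le ht.1) ht.2.le

theorem tsum_ofReal_pow_two_inv_le {f : ℝ → ℝ} (hf : MonotoneOn f (Ioo 0 1)) :
    ∑' k : ℕ, ENNReal.ofReal (f (2⁻¹ ^ (k + 1))) ≤
      2 * ∫⁻ t in Ioo 0 1, ENNReal.ofReal (f t / t) := by
  set I : ℕ → Set ℝ := fun k => Ico (2⁻¹ ^ (k + 1)) (2⁻¹ ^ k)
  have hI : ∀ k, I k = Ico (2⁻¹ ^ (k + 1)) (2 * 2⁻¹ ^ (k + 1)) := fun k => by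
    simp only [I, pow_succ]
    ring_nf
  have hI_sub : ∀ k, I k ⊆ Ioo 0 1 := fun k t ht =>
    ⟨(pow_pos (by norm_num) _).trans_le ht.1,
      ht.2.trans_le (pow_le_one₀ (by norm_num) (by norm_num))⟩
  have hI_disj : Pairwise (Function.onFun Disjoint I) := by
    simpa only [Order.succ_eq_add_one] using
      (pow_right_anti₀ (by norm_num : (0 : ℝ) ≤ 2⁻¹) (by norm_num)).pairwise_disjoint_on_Ico_succ
  calc ∑' k : ℕ, ENNReal.ofReal (f (2⁻¹ ^ (k + 1)))
      ≤ ∑' k, 2 * ∫⁻ t in I k, ENNReal.ofReal (f t / t) := ENNReal.tsum_le_tsum fun k => by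
        rw [hI k]
        exact ofReal_le_two_mul_setLIntegral_Ico (by positivity) (hf.mono (hI k ▸ hI_sub k))
    _ = 2 * ∫⁻ t in ⋃ k, I k, ENNReal.ofReal (f t / t) := by
        rw [ENNReal.tsum_mul_left, lintegral_iUnion (fun k => measurableSet_Ico) hI_disj]
    _ ≤ 2 * ∫⁻ t in Ioo 0 1, ENNReal.ofReal (f t / t) := by
        gcongr 2 * ?_
        exact lintegral_mono_set (iUnion_subset hI_sub)

theorem exists_pow_two_inv_lt_le {r : ℝ} {K : ℕ} (hr : 0 < r) (hrK : r ≤ 2⁻¹ ^ (K + 1)) :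
    ∃ k ≥ K, (2 : ℝ)⁻¹ ^ (k + 2) < r ∧ r ≤ 2⁻¹ ^ (k + 1) := by
  obtain ⟨m, hm, hm'⟩ := exists_nat_pow_near_of_lt_one hr
    (hrK.trans (pow_le_one₀ (by norm_num) (by norm_num))) (by norm_num : (0 : ℝ) < 2⁻¹)
    (by norm_num)
  have hKm : K + 1 ≤ m := by
    by_contra! h
    exact (hm.trans_le hrK).not_ge (pow_le_pow_of_le_one (by norm_num) (by norm_num) (by omega))
  obtain ⟨k, rfl⟩ : ∃ k, m = k + 1 := ⟨m - 1, by omega⟩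
  exact ⟨k, by omega, hm, hm'⟩

theorem card_Icc_ceil_floor_le {u v : ℝ} {L : ℕ} (h : v - u ≤ L) :
    (Finset.Icc ⌈u⌉ ⌊v⌋).card ≤ L + 1 := by
  rw [Int.card_Icc]
  have hreal : ((⌊v⌋ - ⌈u⌉ : ℤ) : ℝ) ≤ L := by
    push_cast; linarith [Int.floor_le v, Int.le_ceil u]
  have hint : ⌊v⌋ - ⌈u⌉ ≤ L := by exact_mod_cast hreal
  omega

section Cone

variable {E : Type*} [NormedAddCommGroup E] [InnerProductSpace ℝ E]

/-- The open cone `H(x, θ, a)`. -/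
def cone (x θ : E) (a : ℝ) : Set E := {y | a * ‖y - x‖ < ⟪y - x, θ⟫}

theorem cone_subset_cone {x θ θ' : E} {a b : ℝ} (h : dist θ θ' ≤ a - b) :
    cone x θ a ⊆ cone x θ' b := by
  intro y (hy : a * ‖y - x‖ < ⟪y - x, θ⟫)
  have hθ : ⟪y - x, θ - θ'⟫ ≤ ‖y - x‖ * (a - b) :=
    (real_inner_le_norm _ _).trans
      (mul_le_mul_of_nonneg_left (by rwa [← dist_eq_norm]) (norm_nonneg _))
  show b * ‖y - x‖ < ⟪y - x, θ'⟫
  rw [inner_sub_right] at hθ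
  linarith

theorem inner_lt_inner_of_mem_cone {x θ y : E} {a : ℝ} (ha : 0 ≤ a) (hy : y ∈ cone x θ a) :
    ⟪x, θ⟫ < ⟪y, θ⟫ := by
  have : 0 < ⟪y - x, θ⟫ := (mul_nonneg ha (norm_nonneg _)).trans_lt hy
  rwa [inner_sub_left, sub_pos] at this

variable [MeasurableSpace E]

def coneBadSet (μ : Measure E) (θ : E) (a ρ : ℝ) (c : ℝ≥0∞) : Set E :=
  {x | μ (closedBall x ρ \ cone x θ a) ≤ c * μ (closedBall x (2 * ρ))}

theorem measure_coneBadSet_inter_closedBall_le (μ : Measure E) (θ z : E) {a ρ : ℝ}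
    (ha : 0 ≤ a) (c : ℝ≥0∞) :
    μ (coneBadSet μ θ a ρ c ∩ closedBall z (ρ / 2)) ≤ c * μ (closedBall z (3 * ρ)) := by
  refine measure_le_of_forall_measure_sublevel_le μ (fun y => ⟪y, θ⟫) fun x ⟨hx, hxz⟩ => ?_
  have hxz : dist x z ≤ ρ / 2 := mem_closedBall.1 hxz
  have hρ : 0 ≤ ρ := by linarith [dist_nonneg (x := x) (y := z)]
  calc μ {y ∈ coneBadSet μ θ a ρ c ∩ closedBall z (ρ / 2) | ⟪y, θ⟫ ≤ ⟪x, θ⟫}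
      ≤ μ (closedBall x ρ \ cone x θ a) := by
        refine measure_mono fun y ⟨⟨_, hyz⟩, hyx⟩ => ⟨?_, fun hy => ?_⟩
        · have := dist_triangle_right y x z
          exact mem_closedBall.2 (by linarith [mem_closedBall.1 hyz])
        · exact (inner_lt_inner_of_mem_cone ha hy).not_ge hyx
    _ ≤ c * μ (closedBall x (2 * ρ)) := hx
    _ ≤ c * μ (closedBall z (3 * ρ)) := by
        gcongr
        exact closedBall_subset_closedBall' (by linarith)

theorem one_le_div_of_notMem_coneBadSet {μ : Measure E} {x θ j : E} {a b ρ r : ℝ}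
    {c d : ℝ≥0∞} (hx : x ∉ coneBadSet μ j b ρ c) (hθj : dist θ j ≤ a - b) (hρr : ρ ≤ r)
    (hr : r ≤ 2 * ρ) (hd : d ≤ c) :
    1 ≤ μ (closedBall x r \ cone x θ a) / (d * μ (closedBall x r)) := by
  have key : d * μ (closedBall x r) < μ (closedBall x r \ cone x θ a) :=
    calc d * μ (closedBall x r) ≤ c * μ (closedBall x (2 * ρ)) :=
          mul_le_mul' hd (measure_mono (closedBall_subset_closedBall hr))
      _ < μ (closedBall x ρ \ cone x j b) := not_le.1 hx
      _ ≤ μ (closedBall x r \ cone x θ a) :=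
          measure_mono <|
            sdiff_subset_sdiff (closedBall_subset_closedBall hρr) (cone_subset_cone hθj)
  rw [ENNReal.le_div_iff_mul_le (Or.inr (zero_le.trans_lt key).ne') (Or.inl key.ne_top), one_mul]
  exact key.le

end Cone

section Lattice

variable {n : ℕ}

def latticePoint (s : ℝ) (m : Fin n → ℤ) : EuclideanSpace ℝ (Fin n) :=
  WithLp.toLp 2 fun i => s * m i

theorem dist_latticePoint_round_le {s : ℝ} (hs : 0 < s) (y : EuclideanSpace ℝ (Fin n)) :
    dist y (latticePoint s fun i => round (y i / s)) ≤ √n * (s / 2) := by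
  have hcoord : ∀ i, dist (y i) (s * round (y i / s)) ≤ s / 2 := fun i => by
    rw [Real.dist_eq, show y i - s * round (y i / s) = s * (y i / s - round (y i / s)) by
      field_simp, abs_mul, abs_of_pos hs]
    nlinarith [abs_sub_round (y i / s)]
  rw [EuclideanSpace.dist_eq, ← Real.sqrt_sq (by positivity : 0 ≤ s / 2), ← Real.sqrt_mul
    n.cast_nonneg]
  gcongr
  calc ∑ i, dist (y i) (s * round (y i / s)) ^ 2 ≤ ∑ _i : Fin n, (s / 2) ^ 2 := by
        gcongr with i; exact hcoord i
    _ = n * (s / 2) ^ 2 := by simp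

theorem encard_setOf_dist_latticePoint_le {s R : ℝ} {L : ℕ} (hs : 0 < s) (hL : 2 * R ≤ L * s)
    (y : EuclideanSpace ℝ (Fin n)) :
    {m | dist y (latticePoint s m) ≤ R}.encard ≤ ((L + 1) ^ n : ℕ) := by
  classical
  have hsub : {m | dist y (latticePoint s m) ≤ R} ⊆
      ↑(Finset.Icc (fun i => ⌈(y i - R) / s⌉) (fun i => ⌊(y i + R) / s⌋)) := by
    intro m hm
    have hi : ∀ i, |y i - s * m i| ≤ R := fun i =>
      (PiLp.dist_apply_le y (latticePoint s m) i).trans hm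
    simp only [Finset.coe_Icc, mem_Icc, Pi.le_def, Int.ceil_le, Int.le_floor]
    refine ⟨fun i => ?_, fun i => ?_⟩
    · rw [div_le_iff₀ hs]; linarith [(abs_le.1 (hi i)).2]
    · rw [le_div_iff₀ hs]; linarith [(abs_le.1 (hi i)).1]
  refine (encard_le_encard hsub).trans ?_
  rw [encard_coe_eq_coe_finsetCard, Pi.card_Icc, Nat.cast_le]
  refine (Finset.prod_le_pow_card _ _ _ fun i _ => card_Icc_ceil_floor_le (L := L) ?_).trans_eq
    (by simp)
  rw [← sub_div, div_le_iff₀ hs]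
  linarith

theorem measure_inter_closedBall_le_of_local (μ : Measure (EuclideanSpace ℝ (Fin n)))
    {S : Set (EuclideanSpace ℝ (Fin n))} {s δ R : ℝ} {L : ℕ} {c : ℝ≥0∞} (hs : 0 < s)
    (hδ : √n * (s / 2) ≤ δ) (hL : 2 * R ≤ L * s)
    (hloc : ∀ z, μ (S ∩ closedBall z δ) ≤ c * μ (closedBall z R)) (N : ℝ) :
    μ (S ∩ closedBall 0 N) ≤ c * ((L + 1) ^ n : ℕ) * μ (closedBall 0 (N + δ + R)) := by
  set K := closedBall (0 : EuclideanSpace ℝ (Fin n)) (N + δ + R)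
  let t : (Fin n → ℤ) → Set (EuclideanSpace ℝ (Fin n)) := fun m =>
    closedBall (latticePoint s m) R ∩ K
  have hcover : S ∩ closedBall 0 N ⊆ ⋃ m, S ∩ closedBall 0 N ∩ closedBall (latticePoint s m) δ :=
    fun y hy => mem_iUnion.2 ⟨_, hy, (dist_latticePoint_round_le hs y).trans hδ⟩
  have hterm : ∀ m, μ (S ∩ closedBall 0 N ∩ closedBall (latticePoint s m) δ) ≤ c * μ (t m) := by
    intro m
    rcases eq_empty_or_nonempty (closedBall 0 N ∩ closedBall (latticePoint s m) δ) with
      h | ⟨w, hwN, hwm⟩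
    · rw [inter_assoc, h, inter_empty, measure_empty]
      exact zero_le
    have hK : closedBall (latticePoint s m) R ⊆ K := by
      refine closedBall_subset_closedBall' ?_
      have := dist_triangle (latticePoint s m) w 0
      rw [mem_closedBall] at hwN hwm
      rw [dist_comm] at hwm
      linarith
    rw [show t m = _ from inter_eq_left.2 hK]
    exact (measure_mono (inter_subset_inter_left _ inter_subset_left)).trans (hloc _)
  have hoverlap : ∀ y, {m | y ∈ t m}.encard ≤ ((L + 1) ^ n : ℕ) := fun y =>
    (encard_le_encard fun m hm => hm.1).trans (encard_setOf_dist_latticePoint_le hs hL y)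
  calc μ (S ∩ closedBall 0 N)
      ≤ ∑' m, μ (S ∩ closedBall 0 N ∩ closedBall (latticePoint s m) δ) :=
        (measure_mono hcover).trans (measure_iUnion_le _)
    _ ≤ ∑' m, c * μ (t m) := ENNReal.tsum_le_tsum hterm
    _ = c * ∑' m, μ (t m) := ENNReal.tsum_mul_left
    _ ≤ c * (((L + 1) ^ n : ℕ) * μ K) := by
        gcongr
        refine (tsum_measure_le_of_encard_le μ (fun m => measurableSet_closedBall.inter
          measurableSet_closedBall) hoverlap).trans ?_
        gcongr
        exact iUnion_subset fun m => inter_subset_right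
    _ = c * ((L + 1) ^ n : ℕ) * μ K := (mul_assoc _ _ _).symm

/-- The constant comes from the lattice of spacing `ρ / (n + 1)`: its balls of radius `ρ / 2`
cover `ℝⁿ`, and a point lies in at most `(6n + 7)ⁿ` of the concentric balls of radius `3ρ`. -/
theorem measure_coneBadSet_inter_closedBall_zero_le (μ : Measure (EuclideanSpace ℝ (Fin n)))
    (θ : EuclideanSpace ℝ (Fin n)) {a ρ : ℝ} (ha : 0 ≤ a) (hρ : 0 < ρ) (hρ1 : ρ ≤ 1)
    (c : ℝ≥0∞) (N : ℝ) :
    μ (coneBadSet μ θ a ρ c ∩ closedBall 0 N) ≤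
      c * ((6 * n + 7) ^ n : ℕ) * μ (closedBall 0 (N + 4)) := by
  have hs : 0 < ρ / (n + 1) := by positivity
  have hδ : √n * (ρ / (n + 1) / 2) ≤ ρ / 2 := by
    have : √n ≤ n + 1 := Real.sqrt_le_iff.2 ⟨by positivity, by nlinarith⟩
    rw [show √n * (ρ / (n + 1) / 2) = √n / (n + 1) * (ρ / 2) by ring]
    exact mul_le_of_le_one_left (by positivity) ((div_le_one (by positivity)).2 this)
  have hL : 2 * (3 * ρ) ≤ ((6 * n + 6 : ℕ) : ℝ) * (ρ / (n + 1)) := by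
    push_cast; field_simp; norm_num
  calc μ (coneBadSet μ θ a ρ c ∩ closedBall 0 N)
      ≤ c * ((6 * n + 6 + 1) ^ n : ℕ) * μ (closedBall 0 (N + ρ / 2 + 3 * ρ)) :=
        measure_inter_closedBall_le_of_local μ hs hδ hL
          (measure_coneBadSet_inter_closedBall_le μ θ · ha c) N
    _ ≤ c * ((6 * n + 7) ^ n : ℕ) * μ (closedBall 0 (N + 4)) :=
        mul_le_mul_right (measure_mono (closedBall_subset_closedBall (by linarith))) _

theorem ae_eventually_forall_notMem_coneBadSet (μ : Measure (EuclideanSpace ℝ (Fin n)))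
    (hfin : ∀ s : Set (EuclideanSpace ℝ (Fin n)), Bornology.IsBounded s → μ s < ⊤)
    {T : Set (EuclideanSpace ℝ (Fin n))} (hT : T.Finite) {a : ℝ} (ha : 0 ≤ a) {ρ : ℕ → ℝ}
    (hρ : ∀ k, 0 < ρ k) (hρ1 : ∀ k, ρ k ≤ 1) {c : ℕ → ℝ≥0∞} (hc : ∑' k, c k ≠ ⊤) :
    ∀ᵐ x ∂μ, ∀ᶠ k in atTop, ∀ j ∈ T, x ∉ coneBadSet μ j a (ρ k) (c k) := by
  suffices ∀ᵐ x ∂μ, ∀ᶠ k in atTop, x ∉ ⋃ j ∈ T, coneBadSet μ j a (ρ k) (c k) by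
    filter_upwards [this] with x hx
    exact hx.mono fun k hk j hj hxj => hk (mem_biUnion hj hxj)
  refine ae_eventually_notMem_of_tsum_measure_inter_closedBall_ne_top μ 0 fun N => ?_
  set C := ((6 * n + 7) ^ n : ℕ) * μ (closedBall 0 (N + 4))
  have hC : C ≠ ⊤ := ENNReal.mul_ne_top (ENNReal.natCast_ne_top _) (hfin _ isBounded_closedBall).ne
  have hk : ∀ k, μ ((⋃ j ∈ T, coneBadSet μ j a (ρ k) (c k)) ∩ closedBall 0 N) ≤
      T.encard * C * c k := fun k =>
    calc μ ((⋃ j ∈ T, coneBadSet μ j a (ρ k) (c k)) ∩ closedBall 0 N)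
        = μ (⋃ j ∈ T, coneBadSet μ j a (ρ k) (c k) ∩ closedBall 0 N) := by rw [iUnion₂_inter]
      _ ≤ ∑' j : T, μ (coneBadSet μ j a (ρ k) (c k) ∩ closedBall 0 N) :=
        measure_biUnion_le μ hT.countable _
      _ ≤ ∑' _ : T, c k * C := ENNReal.tsum_le_tsum fun j =>
        (measure_coneBadSet_inter_closedBall_zero_le μ j ha (hρ k) (hρ1 k) (c k) N).trans_eq
          (mul_assoc _ _ _)
      _ = T.encard * C * c k := by rw [ENNReal.tsum_set_const]; ring
  refine ne_top_of_le_ne_top ?_ (ENNReal.tsum_le_tsum hk)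
  rw [ENNReal.tsum_mul_left]
  exact ENNReal.mul_ne_top (ENNReal.mul_ne_top (by simpa using hT.encard_lt_top.ne) hC) hc

end Lattice

theorem stmt_5 (n : ℕ) (f : ℝ → ℝ)
    (hmono : MonotoneOn f (Ioo (0:ℝ) 1))
    (hf : (∫⁻ t in Ioo (0:ℝ) 1, ENNReal.ofReal (f t / t)) < ⊤)
    (μ : Measure (EuclideanSpace ℝ (Fin n)))
    (hfin : ∀ s : Set (EuclideanSpace ℝ (Fin n)), Bornology.IsBounded s → μ s < ⊤)
    (α : ℝ) (hα : 0 < α) :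
    ∀ᵐ x ∂μ, 1 ≤ liminf
      (fun r : ℝ => ⨅ θ ∈ {θ : EuclideanSpace ℝ (Fin n) | ‖θ‖ = 1},
        μ (closedBall x r \ {y | α * ‖y - x‖ < ⟪y - x, θ⟫}) /
          (ENNReal.ofReal (f r) * μ (closedBall x r)))
      (𝓝[>] 0) := by
  obtain ⟨T, -, hT, hT_cover⟩ := finite_cover_balls_of_compact
    (isCompact_sphere (0 : EuclideanSpace ℝ (Fin n)) 1) (half_pos hα)
  have hc : ∑' k : ℕ, ENNReal.ofReal (f (2⁻¹ ^ (k + 1))) ≠ ⊤ :=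
    ((tsum_ofReal_pow_two_inv_le hmono).trans_lt (ENNReal.mul_lt_top (by norm_num) hf)).ne
  filter_upwards [ae_eventually_forall_notMem_coneBadSet μ hfin hT (half_pos hα).le
    (ρ := fun k => 2⁻¹ ^ (k + 2)) (fun k => pow_pos (by norm_num) (k + 2))
    (fun k => pow_le_one₀ (by norm_num) (by norm_num)) hc] with x hx
  obtain ⟨K, hK⟩ := eventually_atTop.1 hx
  refine le_liminf_of_le (by isBoundedDefault) ?_
  filter_upwards [Ioc_mem_nhdsGT (pow_pos (by norm_num : (0 : ℝ) < 2⁻¹) (K + 1))] with r hr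
  obtain ⟨k, hkK, hkr, hrk⟩ := exists_pow_two_inv_lt_le hr.1 hr.2
  refine le_iInf₂ fun θ hθ => ?_
  obtain ⟨j, hjT, hθj⟩ := mem_iUnion₂.1 (hT_cover (mem_sphere_zero_iff_norm.2 hθ))
  refine one_le_div_of_notMem_coneBadSet (hK k hkK j hjT) (by linarith [mem_ball.1 hθj])
    hkr.le (hrk.trans_eq (by ring)) (ENNReal.ofReal_le_ofReal (hmono ⟨hr.1, ?_⟩ ?_ hrk))
  · exact hrk.trans_lt (pow_lt_one₀ (by norm_num) (by norm_num) (by omega))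
  · exact ⟨pow_pos (by norm_num) _, pow_lt_one₀ (by norm_num) (by norm_num) (by omega)⟩
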